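/- For every element z of D*⊗D* there exists m ∈ ℕ such that for every integer n with n ≥ m, the element (T^n⊗id)(z) lies in the reduced subspace D*⊗̄D*, and likewise (T^n⊗id)(z) ∈ D*⊗̄D* for every integer n with n ≤ −m. -/
import Mathlib


/-- Basis labels for the differential graded algebra `D*` over `k`:
`one` is the constant function `1` (degree 0), `Y s` is the Heaviside function
with singular support `{s}` (degree 0), and `om s` is the Dirac function with
singular support `{s}` (degree 1). -/
inductive DB : Type
  | one : DB
  | Y : ℤ → DB
  | om : ℤ → DB
  deriving DecidableEq

/-- cohomological degree of a basis element -/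
def DB.deg : DB → ℕ
  | .one => 0
  | .Y _ => 0
  | .om _ => 1

/-- singular support of a basis element -/
def DB.supp : DB → Finset ℤ
  | .one => ∅
  | .Y s => {s}
  | .om s => {s}

variable (k : Type) [CommRing k]

/-- The `n`-fold tensor power `D*^{⊗n}` of the complex `D*` over `k`, modelled as the
free `k`-module on the basis of decomposable tensors `f₁ ⊗ ⋯ ⊗ f_n` of basis elements. -/
abbrev Tot (n : ℕ) : Type := (Fin n → DB) →₀ k

/-- total (cohomological) degree of a basis tensor -/
def degT {n : ℕ} (g : Fin n → DB) : ℕ := ∑ i, (g i).deg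

/-- the homogeneous degree-`i` component of `D*^{⊗n}` -/
def homog (n i : ℕ) : Submodule k (Tot k n) where
  carrier := {x | ∀ g, x g ≠ 0 → degT g = i}
  add_mem' := by
    intro x y hx hy g hg
    by_cases h : x g = 0
    · refine hy g ?_
      intro h'; apply hg; simp [Finsupp.add_apply, h, h']
    · exact hx g h
  zero_mem' := by intro g hg; simp at hg
  smul_mem' := by
    intro c x hx g hg
    refine hx g fun h => hg ?_
    simp [Finsupp.smul_apply, h]

lemma mem_homog {n i : ℕ} {x : Tot k n} :
    x ∈ homog k n i ↔ ∀ g, x g ≠ 0 → degT g = i := Iff.rfl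

/-- `I` : the span of the basis tensors `f₀ ⊗ ⋯ ⊗ f_r` in which every factor is a
Heaviside or a Dirac function (no factor equals `1`). -/
def noOne (n : ℕ) : Submodule k (Tot k n) where
  carrier := {x | ∀ g, x g ≠ 0 → ∀ i, g i ≠ DB.one}
  add_mem' := by
    intro x y hx hy g hg
    by_cases h : x g = 0
    · refine hy g ?_
      intro h'; apply hg; simp [Finsupp.add_apply, h, h']
    · exact hx g h
  zero_mem' := by intro g hg; simp at hg
  smul_mem' := by
    intro c x hx g hg
    refine hx g fun h => hg ?_
    simp [Finsupp.smul_apply, h]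

lemma mem_noOne {n : ℕ} {x : Tot k n} :
    x ∈ noOne k n ↔ ∀ g, x g ≠ 0 → ∀ i, g i ≠ DB.one := Iff.rfl

/-- The Koszul-sign differential on a basis tensor:
`d(f₁ ⊗ ⋯ ⊗ f_n) = Σ_i (-1)^{deg f₁ + ⋯ + deg f_{i-1}} f₁ ⊗ ⋯ ⊗ d f_i ⊗ ⋯ ⊗ f_n`,
where `d(Y s) = - ω_s`, `d 1 = 0`, `d (ω s) = 0`. -/
noncomputable def dB {n : ℕ} (g : Fin n → DB) : Tot k n :=
  ∑ i : Fin n,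
    match g i with
    | DB.Y s =>
        Finsupp.single (Function.update g i (DB.om s))
          (-(-1 : k) ^ (∑ j ∈ Finset.univ.filter (fun j : Fin n => j < i), (g j).deg))
    | _ => (0 : Tot k n)

/-- the total differential of the complex `D*^{⊗n}` (it raises degree by one) -/
noncomputable def dT (n : ℕ) : Tot k n →ₗ[k] Tot k n :=
  Finsupp.linearCombination k (dB k (n := n))


/-- The reduced subcomplex `D*^{⊗̄n} ⊆ D*^{⊗n}` : the span of the basis tensors
`f₁ ⊗ ⋯ ⊗ f_n` whose factors have pairwise disjoint singular supports. -/
def reduced (n : ℕ) : Submodule k (Tot k n) where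
  carrier := {x | ∀ g, x g ≠ 0 → ∀ i j : Fin n, i ≠ j → Disjoint ((g i).supp) ((g j).supp)}
  add_mem' := by
    intro x y hx hy g hg
    by_cases h : x g = 0
    · refine hy g ?_
      intro h'; apply hg; simp [Finsupp.add_apply, h, h']
    · exact hx g h
  zero_mem' := by intro g hg; simp at hg
  smul_mem' := by
    intro c x hx g hg
    refine hx g fun h => hg ?_
    simp [Finsupp.smul_apply, h]

lemma mem_reduced {n : ℕ} {x : Tot k n} :
    x ∈ reduced k n ↔
      ∀ g, x g ≠ 0 → ∀ i j : Fin n, i ≠ j → Disjoint ((g i).supp) ((g j).supp) := Iff.rfl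

/-- The translation operator `T^m` on basis elements: `(T^m a)(x) = a (x + m)`, so
`T^m 1 = 1`, `T^m Y_s = Y_{s-m}` and `T^m ω_s = ω_{s-m}`. -/
def DB.shift (m : ℤ) : DB → DB
  | .one => .one
  | .Y s => .Y (s - m)
  | .om s => .om (s - m)

/-- the operator `T^m ⊗ id` on `D* ⊗ D*` -/
noncomputable def TT (m : ℤ) : Tot k 2 →ₗ[k] Tot k 2 :=
  Finsupp.linearCombination k fun g => Finsupp.single ![(g 0).shift m, g 1] 1

def DB.val : DB → ℤ
  | .one => 0
  | .Y s => s
  | .om s => s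

lemma shift_disjoint (a b : DB) (n : ℤ) (h : n ≠ a.val - b.val) :
    Disjoint ((a.shift n).supp) (b.supp) := by
  cases a <;> cases b <;>
    simp only [DB.shift, DB.supp, DB.val] at * <;>
    simp_all [Finset.disjoint_singleton_left] <;> omega

/-- For every element `z` of `D* ⊗ D*` there exists `m ∈ ℕ` such that
for every integer `n` with `n ≥ m` or `n ≤ -m`, the element `(T^n ⊗ id)(z)` lies in the
reduced subspace `D* ⊗̄ D*`. -/
theorem statement15 (k : Type) [CommRing k] :
    ∀ z : Tot k 2, ∃ m : ℕ, ∀ n : ℤ,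
      ((m : ℤ) ≤ n ∨ n ≤ -(m : ℤ)) → TT k n z ∈ reduced k 2 := by
  intro z
  refine ⟨(z.support.sup fun g => ((g 0).val - (g 1).val).natAbs) + 1, ?_⟩
  intro n hn
  rw [mem_reduced]
  intro g' hg'
  rw [TT, Finsupp.linearCombination_apply, Finsupp.sum, Finset.sum_apply'] at hg'
  obtain ⟨g, hg, hne⟩ := Finset.exists_ne_zero_of_sum_ne_zero hg'
  rw [Finsupp.smul_apply, Finsupp.single_apply] at hne
  have hgg' : g' = ![(g 0).shift n, g 1] := by
    by_contra h
    simp [Ne.symm h] at hne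
  have hnv : n ≠ (g 0).val - (g 1).val := by
    have hb : ((g 0).val - (g 1).val).natAbs ≤
        z.support.sup fun h => ((h 0).val - (h 1).val).natAbs :=
      Finset.le_sup (f := fun h => ((h 0).val - (h 1).val).natAbs) hg
    set a := ((g 0).val - (g 1).val) with ha
    set M := z.support.sup fun h => ((h 0).val - (h 1).val).natAbs with hM
    clear_value a M
    clear hne hg' hgg' hg
    clear hM ha
    clear z g g'
    rcases hn with h | h <;> omega
  have key : Disjoint (((g 0).shift n).supp) ((g 1).supp) := shift_disjoint _ _ _ hnv
  subst hgg'
  intro i j hij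
  fin_cases i <;> fin_cases j <;> simp_all <;> exact key.symm
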